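/- arXiv:1812.11039 — 3 statements merged into one kernel-verified Lean document; each statement's English description precedes it below -/
import Mathlib

section
/- Let $f : \mathbb{R}^n \to \mathbb{R}$ be a real analytic function that is not identically zero. Then its zero set $\{w \in \mathbb{R}^n \mid f(w) = 0\}$ has Lebesgue measure zero. -/
/-!
In one variable, the zeros of an analytic function that is not identically zero form a discrete,
hence countable, set. In `n + 1` variables, pick `w` with `f w ≠ 0` and split off the first
coordinate: the line through `w` meets the zero set in a null set, and for every `x` off it the
slice `y ↦ f (x, y)` is nonzero at `y = tail w`, so it vanishes only on a null set by induction.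
Fubini–Tonelli assembles the slices.
-/

open MeasureTheory Set Filter

variable {𝕜 E : Type*} [NontriviallyNormedField 𝕜] [NormedAddCommGroup E] [NormedSpace 𝕜 E]

theorem AnalyticOnNhd.ae_ne_zero [PreconnectedSpace 𝕜] [SecondCountableTopology 𝕜]
    [MeasurableSpace 𝕜] {μ : Measure 𝕜} [NullSingletonClass μ] {f : 𝕜 → E}
    (hf : AnalyticOnNhd 𝕜 f univ) (hne : ∃ x, f x ≠ 0) : ∀ᵐ x ∂μ, f x ≠ 0 := by
  rcases hf.eqOn_zero_or_eventually_ne_zero_of_preconnected isPreconnected_univ with h | h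
  · obtain ⟨x, hx⟩ := hne
    exact absurd (h (mem_univ x)) hx
  · rw [← Measure.restrict_univ (μ := μ)]
    exact ae_restrict_le_codiscreteWithin MeasurableSet.univ h

theorem AnalyticOnNhd.comp_finCons {F : Type*} [NormedAddCommGroup F] [NormedSpace 𝕜 F] {n : ℕ}
    {f : (Fin (n + 1) → 𝕜) → E} (hf : AnalyticOnNhd 𝕜 f univ) {g : F → 𝕜} {h : F → Fin n → 𝕜}
    (hg : AnalyticOnNhd 𝕜 g univ) (hh : AnalyticOnNhd 𝕜 h univ) :
    AnalyticOnNhd 𝕜 (fun z ↦ f (Fin.cons (g z) (h z))) univ := by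
  have hcons := (Fin.consEquivL 𝕜 fun _ : Fin (n + 1) ↦ 𝕜).toContinuousLinearMap.analyticOnNhd univ
  exact (hf.comp hcons (mapsTo_univ _ _)).comp (hg.prod hh) (mapsTo_univ _ _)

theorem AnalyticOnNhd.ae_pi_ne_zero [PreconnectedSpace 𝕜] [SecondCountableTopology 𝕜]
    [MeasurableSpace 𝕜] [OpensMeasurableSpace 𝕜] {μ : Measure 𝕜} [SigmaFinite μ]
    [NullSingletonClass μ] {n : ℕ} {f : (Fin n → 𝕜) → E}
    (hf : AnalyticOnNhd 𝕜 f univ) (hne : ∃ w, f w ≠ 0) :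
    ∀ᵐ w ∂Measure.pi fun _ ↦ μ, f w ≠ 0 := by
  induction n with
  | zero =>
    obtain ⟨w₀, hw₀⟩ := hne
    exact .of_forall fun w ↦ Subsingleton.elim w w₀ ▸ hw₀
  | succ n ih =>
    obtain ⟨w, hw⟩ := hne
    have hrow : ∀ᵐ x ∂μ, f (Fin.cons x (Fin.tail w)) ≠ 0 :=
      (hf.comp_finCons analyticOnNhd_id analyticOnNhd_const).ae_ne_zero
        ⟨w 0, by rwa [Fin.cons_self_tail]⟩
    have hslices : ∀ᵐ x ∂μ, ∀ᵐ y ∂Measure.pi fun _ ↦ μ, f (Fin.cons x y) ≠ 0 :=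
      hrow.mono fun x hx ↦ ih (hf.comp_finCons analyticOnNhd_const analyticOnNhd_id) ⟨_, hx⟩
    have hopen : IsOpen {z : 𝕜 × (Fin n → 𝕜) | f (Fin.cons z.1 z.2) ≠ 0} :=
      isOpen_ne_fun (hf.comp_finCons analyticOnNhd_fst analyticOnNhd_snd).continuous
        continuous_const
    have hprod := (Measure.ae_prod_iff_ae_ae hopen.measurableSet).2 hslices
    simpa using (measurePreserving_piFinSuccAbove (fun _ ↦ μ) 0).quasiMeasurePreserving.ae hprod

theorem stmt_1 (n : ℕ) (f : (Fin n → ℝ) → ℝ)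
    (hf : AnalyticOnNhd ℝ f Set.univ)
    (hne : ∃ w, f w ≠ 0) :
    volume {w : Fin n → ℝ | f w = 0} = 0 := by
  simpa [ae_iff, ← volume_pi] using hf.ae_pi_ne_zero (μ := volume) hne
end

section
/- Let $\sigma : \mathbb{R} \to \mathbb{R}$ be real analytic with $\sigma'(0) \neq 0$. Let $a, b \in \mathbb{R}^n$ with $a \neq b$. Then the set $\Omega = \{ w \in \mathbb{R}^n \mid \sigma(a^\top w) = \sigma(b^\top w) \}$ has Lebesgue measure zero. -/
/-!
Differentiating `t ↦ σ (a ⬝ᵥ t eᵢ) - σ (b ⬝ᵥ t eᵢ)` at `0`, for a coordinate `i` with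
`a i ≠ b i`, gives `σ'(0) (a i - b i) ≠ 0`, so the analytic function `w ↦ σ (a ⬝ᵥ w) - σ (b ⬝ᵥ w)`
does not vanish identically. The zero set of such a function on `ℝⁿ` is null: in one variable
it is discrete, hence countable, and in general one slices along the first coordinate and
applies Fubini and induction on `n`.
-/

open MeasureTheory Matrix

section AnalyticZeroSet

variable {E : Type*} [NormedAddCommGroup E] [NormedSpace ℝ E]

theorem AnalyticOnNhd.countable_setOf_eq_zero {g : ℝ → E} (hg : AnalyticOnNhd ℝ g Set.univ)
    {t₀ : ℝ} (ht₀ : g t₀ ≠ 0) : {t | g t = 0}.Countable := by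
  rcases hg.eqOn_zero_or_eventually_ne_zero_of_preconnected isPreconnected_univ with h | h
  · exact absurd (h (Set.mem_univ t₀)) ht₀
  · have hdiscrete : IsDiscrete {t | g t = 0} := by
      simpa [Set.compl_ofPred] using (mem_codiscrete'.mp h).2
    exact (HereditarilyLindelofSpace.isLindelof _).countable_of_isDiscrete hdiscrete

theorem AnalyticOnNhd.prod_measure_setOf_eq_zero {F : Type*} [NormedAddCommGroup F]
    [NormedSpace ℝ F] [MeasurableSpace F] [BorelSpace F] [SecondCountableTopology F]
    {μ : Measure F} [SFinite μ] {g : ℝ × F → E} (hg : AnalyticOnNhd ℝ g Set.univ)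
    {p₀ : ℝ × F} (hp₀ : g p₀ ≠ 0)
    (hslice : ∀ t y, g (t, y) ≠ 0 → μ {y | g (t, y) = 0} = 0) :
    (volume.prod μ) {p | g p = 0} = 0 := by
  have hmeas : MeasurableSet {p | g p = 0} :=
    (isClosed_eq (continuousOn_univ.mp hg.continuousOn) continuous_const).measurableSet
  rw [Measure.measure_prod_null hmeas]
  -- For all `t` off a countable set, the slice at `t` does not vanish at `p₀.2`.
  have hae : ∀ᵐ t, g (t, p₀.2) ≠ 0 :=
    (AnalyticOnNhd.countable_setOf_eq_zero hg.curry_left hp₀).ae_notMem volume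
  filter_upwards [hae] with t ht
  exact hslice t p₀.2 ht

theorem AnalyticOnNhd.volume_setOf_eq_zero {n : ℕ} {f : (Fin n → ℝ) → E}
    (hf : AnalyticOnNhd ℝ f Set.univ) {w₀ : Fin n → ℝ} (hw₀ : f w₀ ≠ 0) :
    volume {w | f w = 0} = 0 := by
  induction n with
  | zero =>
    have hempty : {w | f w = 0} = ∅ := by
      ext w
      simp [Subsingleton.elim w w₀, hw₀]
    simp [hempty]
  | succ n ih =>
    set g : ℝ × (Fin n → ℝ) → E := f ∘ Fin.consEquivL ℝ (fun _ => ℝ)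
    have hg : AnalyticOnNhd ℝ g Set.univ :=
      hf.comp (ContinuousLinearEquiv.analyticOnNhd _ _) (Set.mapsTo_univ _ _)
    have hcons (w : Fin (n + 1) → ℝ) : Fin.consEquivL ℝ (fun _ => ℝ) (w 0, Fin.tail w) = w := by
      ext i
      simp [Fin.consEquivL_apply]
    have hpreimage : {w | f w = 0} =
        MeasurableEquiv.piFinSuccAbove (fun _ => ℝ) 0 ⁻¹' {p | g p = 0} := by
      ext w
      simp [g, hcons]
    rw [hpreimage, (volume_preserving_piFinSuccAbove (fun _ => ℝ) 0).measure_preimage_equiv,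
      Measure.volume_eq_prod]
    exact hg.prod_measure_setOf_eq_zero (p₀ := (w₀ 0, Fin.tail w₀)) (by simpa [g, hcons])
      fun t y hty => ih hg.curry_right hty

end AnalyticZeroSet

theorem exists_comp_mul_ne {σ : ℝ → ℝ} (hσ' : deriv σ 0 ≠ 0) {α β : ℝ} (hαβ : α ≠ β) :
    ∃ t, σ (α * t) ≠ σ (β * t) := by
  by_contra! h
  have hderiv := congr_arg (deriv · 0) (funext h : (fun t => σ (α * t)) = fun t => σ (β * t))
  simp only [deriv_comp_mul_left, mul_zero, smul_eq_mul] at hderiv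
  exact hαβ (mul_right_cancel₀ hσ' hderiv)

theorem exists_comp_dotProduct_ne {n : ℕ} {σ : ℝ → ℝ} (hσ' : deriv σ 0 ≠ 0) {a b : Fin n → ℝ}
    (hab : a ≠ b) : ∃ w, σ (a ⬝ᵥ w) ≠ σ (b ⬝ᵥ w) := by
  obtain ⟨i, hi⟩ := Function.ne_iff.mp hab
  obtain ⟨t, ht⟩ := exists_comp_mul_ne hσ' hi
  exact ⟨Pi.single i t, by simpa only [dotProduct_single] using ht⟩

theorem analyticOnNhd_dotProduct {𝕜 ι : Type*} [NontriviallyNormedField 𝕜] [CompleteSpace 𝕜]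
    [Fintype ι] (c : ι → 𝕜) (s : Set (ι → 𝕜)) : AnalyticOnNhd 𝕜 (c ⬝ᵥ ·) s :=
  (LinearMap.toContinuousLinearMap (dotProductBilin 𝕜 𝕜 c)).analyticOnNhd s

theorem stmt_2 (n : ℕ) (σ : ℝ → ℝ) (hσ : AnalyticOnNhd ℝ σ Set.univ)
    (hσ' : deriv σ 0 ≠ 0) (a b : Fin n → ℝ) (hab : a ≠ b) :
    volume {w : Fin n → ℝ | σ (a ⬝ᵥ w) = σ (b ⬝ᵥ w)} = 0 := by
  have hdot (c : Fin n → ℝ) : AnalyticOnNhd ℝ (fun w => σ (c ⬝ᵥ w)) Set.univ :=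
    hσ.comp (analyticOnNhd_dotProduct c _) (Set.mapsTo_univ _ _)
  obtain ⟨w₀, hw₀⟩ := exists_comp_dotProduct_ne hσ' hab
  simpa only [Pi.sub_apply, sub_eq_zero] using
    ((hdot a).sub (hdot b)).volume_setOf_eq_zero (sub_ne_zero.mpr hw₀)
end

section
/- Let $\sigma : \mathbb{R} \to \mathbb{R}$ be real analytic with $\sigma^{(k)}(0) \neq 0$ for all $0 \le k \le N-1$, and let $x_1, \dots, x_N \in \mathbb{R}$ be distinct. Then the set $\Omega = \{ w \in \mathbb{R}^N \mid \det\big( [\sigma(w_i x_j)]_{i,j=1}^N \big) = 0 \}$ has Lebesgue measure zero in $\mathbb{R}^N$. -/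
open MeasureTheory

lemma aux_1d (f : ℝ → ℝ) (hf : AnalyticOnNhd ℝ f Set.univ)
    (h : ∃ t, f t ≠ 0) : volume {t : ℝ | f t = 0} = 0 := by
  rcases hf.eqOn_zero_or_eventually_ne_zero_of_preconnected isPreconnected_univ with h0 | h1
  · obtain ⟨t, ht⟩ := h; exact absurd (h0 (Set.mem_univ t)) ht
  · have hmem : {x : ℝ | f x ≠ 0} ∈ Filter.codiscrete ℝ := h1
    rw [mem_codiscrete'] at hmem
    have hd : DiscreteTopology ↑({x : ℝ | f x ≠ 0}ᶜ) := hmem.2.to_subtype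
    have : Countable ↑({x : ℝ | f x ≠ 0}ᶜ) :=
      (TopologicalSpace.separableSpace_iff_countable).mp inferInstance
    have hc : Set.Countable ({x : ℝ | f x ≠ 0}ᶜ) := Set.countable_coe_iff.mp this
    have : {t : ℝ | f t = 0} = {x : ℝ | f x ≠ 0}ᶜ := by ext t; simp
    rw [this]
    exact hc.measure_zero _

lemma cons_analytic1 {n : ℕ} (c : Fin n → ℝ) :
    AnalyticOnNhd ℝ (fun t : ℝ => (Fin.cons t c : Fin (n+1) → ℝ)) Set.univ := by
  rw [analyticOnNhd_pi_iff]
  intro i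
  refine Fin.cases ?_ (fun j => ?_) i
  · simpa using analyticOnNhd_id
  · simpa using analyticOnNhd_const (v := c j)

lemma cons_analytic2 {n : ℕ} (t : ℝ) :
    AnalyticOnNhd ℝ (fun w : Fin n → ℝ => (Fin.cons t w : Fin (n+1) → ℝ)) Set.univ := by
  rw [analyticOnNhd_pi_iff]
  intro i
  refine Fin.cases ?_ (fun j => ?_) i
  · simpa using analyticOnNhd_const (v := t)
  · simp only [Fin.cons_succ]; exact (ContinuousLinearMap.proj j (R := ℝ) (φ := fun _ : Fin n => ℝ)).analyticOnNhd Set.univ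

lemma aux_nd : ∀ (n : ℕ) (f : (Fin n → ℝ) → ℝ), AnalyticOnNhd ℝ f Set.univ →
    (∃ w, f w ≠ 0) → volume {w : Fin n → ℝ | f w = 0} = 0 := by
  intro n
  induction n with
  | zero =>
    rintro f hf ⟨w₀, hw₀⟩
    have he : {w : Fin 0 → ℝ | f w = 0} = ∅ := by
      ext w
      simp only [Set.mem_setOf_eq, Set.mem_empty_iff_false, iff_false]
      have : w = w₀ := Subsingleton.elim _ _
      rw [this]; exact hw₀
    simp [he]
  | succ n ih =>
    rintro f hf ⟨w₀, hw₀⟩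
    have hcont : Continuous f := by
      rw [← continuousOn_univ]; exact hf.continuousOn
    have hS : MeasurableSet {w : Fin (n+1) → ℝ | f w = 0} :=
      (isClosed_eq hcont continuous_const).measurableSet
    set e := MeasurableEquiv.piFinSuccAbove (fun _ : Fin (n+1) => ℝ) 0 with he
    have hmp : MeasurePreserving e :=
      volume_preserving_piFinSuccAbove (fun _ : Fin (n+1) => ℝ) 0
    have hsymm : ∀ p : ℝ × (Fin n → ℝ), e.symm p = Fin.cons p.1 p.2 := by
      intro p
      ext i
      simp [he, MeasurableEquiv.piFinSuccAbove, Fin.insertNth_zero]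
    set T : Set (ℝ × (Fin n → ℝ)) := {p | f (Fin.cons p.1 p.2) = 0} with hT
    have hpre : e ⁻¹' T = {w : Fin (n+1) → ℝ | f w = 0} := by
      ext w
      simp only [Set.mem_preimage, hT, Set.mem_setOf_eq]
      have : Fin.cons (e w).1 (e w).2 = w := by
        rw [← hsymm]; exact e.symm_apply_apply w
      rw [this]
    have hTm : MeasurableSet T := by
      have : T = e.symm ⁻¹' {w : Fin (n+1) → ℝ | f w = 0} := by
        ext p; simp [hT, hsymm p]
      rw [this]; exact e.symm.measurable hS
    have hvol : volume {w : Fin (n+1) → ℝ | f w = 0} = (volume.prod volume) T := by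
      rw [← hpre]
      exact hmp.measure_preimage hTm.nullMeasurableSet
    rw [hvol, Measure.measure_prod_null hTm]
    -- the exceptional set
    set g : ℝ → ℝ := fun t => f (Fin.cons t (Fin.tail w₀)) with hg
    have hga : AnalyticOnNhd ℝ g Set.univ :=
      hf.comp (cons_analytic1 (Fin.tail w₀)) (Set.mapsTo_univ _ _)
    have hgnull : volume {t : ℝ | g t = 0} = 0 := by
      apply aux_1d g hga
      refine ⟨w₀ 0, ?_⟩
      rw [hg]; simpa [Fin.cons_self_tail] using hw₀
    have : ∀ᵐ t : ℝ, g t ≠ 0 := by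
      rw [MeasureTheory.ae_iff]
      simpa using hgnull
    filter_upwards [this] with t hgt
    have : Prod.mk t ⁻¹' T = {w' : Fin n → ℝ | f (Fin.cons t w') = 0} := rfl
    rw [this]
    exact ih (fun w' => f (Fin.cons t w'))
      (hf.comp (cons_analytic2 t) (Set.mapsTo_univ _ _)) ⟨Fin.tail w₀, hgt⟩

lemma iteratedDeriv_finset_sum {u : Finset α} {f : α → ℝ → ℝ} {k : ℕ}
    (h : ∀ j ∈ u, ContDiff ℝ k (f j)) (t : ℝ) :
    iteratedDeriv k (fun t => ∑ j ∈ u, f j t) t = ∑ j ∈ u, iteratedDeriv k (f j) t := by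
  simp only [iteratedDeriv_eq_iteratedFDeriv]
  rw [iteratedFDeriv_sum h]
  simp

lemma aux_exists (N : ℕ) (σ : ℝ → ℝ) (hσ : AnalyticOnNhd ℝ σ Set.univ)
    (hσ0 : ∀ k : ℕ, k < N → iteratedDeriv k σ 0 ≠ 0)
    (x : Fin N → ℝ) (hx : Function.Injective x) :
    ∃ w : Fin N → ℝ, (Matrix.of fun i j : Fin N => σ (w i * x j)).det ≠ 0 := by
  by_contra hcon
  push_neg at hcon
  have hσc : ContDiff ℝ (⊤ : ℕ∞) σ := by
    rw [← contDiffOn_univ]; exact hσ.contDiffOn uniqueDiffOn_univ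
  set v : ℝ → (Fin N → ℝ) := fun t j => σ (t * x j) with hv
  have hspan : Submodule.span ℝ (Set.range v) ≠ ⊤ := by
    intro htop
    obtain ⟨b, hbsub, hbspan, hbli⟩ := exists_linearIndependent ℝ (Set.range v)
    rw [htop] at hbspan
    have hble : ⊤ ≤ Submodule.span ℝ (Set.range ((↑) : b → (Fin N → ℝ))) := by
      rw [Subtype.range_coe, hbspan]
    let B : Module.Basis b ℝ (Fin N → ℝ) := Module.Basis.mk hbli hble
    haveI : Fintype b := FiniteDimensional.fintypeBasisIndex B
    let eidx : b ≃ Fin N := B.indexEquiv (Pi.basisFun ℝ (Fin N))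
    let B' : Module.Basis (Fin N) ℝ (Fin N → ℝ) := B.reindex eidx
    have hmem : ∀ i, ∃ t, v t = B' i := by
      intro i
      have hBb : (B' i : Fin N → ℝ) ∈ b := by
        have : B' i = B (eidx.symm i) := B.reindex_apply eidx i
        rw [this, Module.Basis.mk_apply]
        exact (eidx.symm i).2
      exact hbsub hBb
    choose w hw using hmem
    have hrows : LinearIndependent ℝ (fun i => (Matrix.of fun i j : Fin N => σ (w i * x j)) i) := by
      have hr : (fun i => (Matrix.of fun i j : Fin N => σ (w i * x j)) i) = fun i => B' i := by
        funext i; rw [← hw i]; rfl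
      rw [hr]; exact B'.linearIndependent
    have hunit := Matrix.linearIndependent_rows_iff_isUnit.mp hrows
    exact ((Matrix.isUnit_iff_isUnit_det _).mp hunit).ne_zero (hcon w)
  obtain ⟨x₀, hx₀⟩ : ∃ y, y ∉ Submodule.span ℝ (Set.range v) := by
    by_contra hall
    push_neg at hall
    exact hspan (Submodule.eq_top_iff'.mpr hall)
  obtain ⟨φ, hφx₀, hφmap⟩ := Submodule.exists_dual_map_eq_bot_of_notMem hx₀ inferInstance
  have hker : ∀ y ∈ Submodule.span ℝ (Set.range v), φ y = 0 := by
    intro y hy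
    have : φ y ∈ (⊥ : Submodule ℝ ℝ) := hφmap ▸ Submodule.mem_map_of_mem hy
    simpa using this
  set c : Fin N → ℝ := fun i => φ (fun j => if i = j then 1 else 0) with hc
  have hczero : ∀ t : ℝ, ∑ j, c j • σ (x j * t) = 0 := by
    intro t
    have hv0 : φ (v t) = 0 := hker _ (Submodule.subset_span ⟨t, rfl⟩)
    rw [LinearMap.pi_apply_eq_sum_univ φ (v t)] at hv0
    rw [← hv0]
    refine Finset.sum_congr rfl fun j _ => ?_
    simp [hv, hc, smul_eq_mul, mul_comm t (x j)]
    ring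
  have hderiv : ∀ k : ℕ, k < N → ∑ j, c j * x j ^ k = 0 := by
    intro k hk
    have h0 : iteratedDeriv k (fun t => ∑ j, c j • σ (x j * t)) 0 = 0 := by
      have hz : (fun t => ∑ j, c j • σ (x j * t)) = fun _ => (0:ℝ) := by
        funext t; exact hczero t
      rw [hz]
      simp only [iteratedDeriv_eq_iteratedFDeriv, iteratedFDeriv_zero_fun]
      simp
    rw [iteratedDeriv_finset_sum] at h0
    · have heach : ∀ j : Fin N, iteratedDeriv k (fun t => c j • σ (x j * t)) 0
          = c j * (x j ^ k * iteratedDeriv k σ 0) := by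
        intro j
        have hg : ContDiff ℝ k (fun t : ℝ => σ (x j * t)) :=
          (hσc.of_le (mod_cast le_top)).comp (contDiff_const.mul contDiff_id)
        have h1 : iteratedDeriv k (fun t : ℝ => c j • σ (x j * t)) 0
            = c j * iteratedDeriv k (fun t : ℝ => σ (x j * t)) 0 := by
          simp only [smul_eq_mul, ← iteratedDerivWithin_univ]
          exact iteratedDerivWithin_const_mul (Set.mem_univ 0) uniqueDiffOn_univ (c j)
            (hg.contDiffWithinAt)
        rw [h1, congrFun (iteratedDeriv_comp_const_mul (hσc.of_le (mod_cast le_top)) (x j)) 0, mul_zero]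
      simp only [heach] at h0
      have hD : iteratedDeriv k σ 0 ≠ 0 := hσ0 k hk
      have hmul : (∑ j, c j * x j ^ k) * iteratedDeriv k σ 0 = 0 := by
        calc (∑ j, c j * x j ^ k) * iteratedDeriv k σ 0
            = ∑ j, c j * (x j ^ k * iteratedDeriv k σ 0) := by
              rw [Finset.sum_mul]; exact Finset.sum_congr rfl fun j _ => by ring
          _ = 0 := h0
      exact (mul_eq_zero.mp hmul).resolve_right hD
    · intro j _
      exact (((hσc.of_le (mod_cast le_top)).comp (contDiff_const.mul contDiff_id)).const_smul (c j))
  -- Vandermonde ⇒ c = 0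
  have hvdet : (Matrix.vandermonde x).transpose.det ≠ 0 := by
    rw [Matrix.det_transpose, Matrix.det_vandermonde]
    refine Finset.prod_ne_zero_iff.mpr fun i _ => Finset.prod_ne_zero_iff.mpr fun j hj => ?_
    have hij : i ≠ j := by
      intro h; rw [h] at hj; simp at hj
    exact sub_ne_zero.mpr fun h => hij (hx h).symm
  have hmv : (Matrix.vandermonde x).transpose.mulVec c = 0 := by
    funext k
    simp only [Matrix.mulVec, Matrix.transpose_apply, Matrix.vandermonde,
      Matrix.of_apply, Pi.zero_apply, dotProduct]
    rw [← hderiv k (k.2)]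
    exact Finset.sum_congr rfl fun j _ => by ring
  have hc0 : c = 0 := Matrix.eq_zero_of_mulVec_eq_zero hvdet hmv
  apply hφx₀
  rw [LinearMap.pi_apply_eq_sum_univ φ x₀]
  refine Finset.sum_eq_zero fun i _ => ?_
  have : φ (fun j => if i = j then 1 else 0) = c i := rfl
  rw [this, hc0]
  simp

theorem stmt_10 (N : ℕ) (σ : ℝ → ℝ) (hσ : AnalyticOnNhd ℝ σ Set.univ)
    (hσ0 : ∀ k : ℕ, k < N → iteratedDeriv k σ 0 ≠ 0)
    (x : Fin N → ℝ) (hx : Function.Injective x) :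
    volume {w : Fin N → ℝ |
      (Matrix.of fun i j : Fin N => σ (w i * x j)).det = 0} = 0 := by
  have hdet : (fun w : Fin N → ℝ => (Matrix.of fun i j : Fin N => σ (w i * x j)).det)
      = fun w => ∑ τ : Equiv.Perm (Fin N),
          ((Equiv.Perm.sign τ : ℤ) : ℝ) * ∏ i, σ (w (τ i) * x i) := by
    funext w
    rw [Matrix.det_apply]
    exact Finset.sum_congr rfl fun τ _ => by
      simp [Units.smul_def, zsmul_eq_mul]
  have hF : AnalyticOnNhd ℝ
      (fun w : Fin N → ℝ => (Matrix.of fun i j : Fin N => σ (w i * x j)).det) Set.univ := by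
    rw [hdet]
    apply Finset.analyticOnNhd_fun_sum
    intro τ _
    apply AnalyticOnNhd.mul analyticOnNhd_const
    apply Finset.analyticOnNhd_fun_prod
    intro i _
    exact hσ.comp
      (((ContinuousLinearMap.proj (τ i) (R := ℝ) (φ := fun _ : Fin N => ℝ)).analyticOnNhd
        Set.univ).mul analyticOnNhd_const)
      (Set.mapsTo_univ _ _)
  exact aux_nd N _ hF (aux_exists N σ hσ hσ0 x hx)
end
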